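/- If f(x,y) = y·Σ_k b_k (xy)^k (x+y)^{m-2k} with all b_k ≥ 0, then G(f) = y·Σ_k b'_k (xy)^k (x+y)^{m+2-2k} with all b'_k ≥ 0, where G = xy²(∂_x + ∂_y) + (x²y²/2)(∂_x² + ∂_y²) + x²y² ∂_x∂_y. -/
import Mathlib

open MvPolynomial Finset

set_option maxHeartbeats 3000000

/-- The Eulerian operator `G = xy²(∂_x+∂_y) + (x²y²/2)(∂_x²+∂_y²) + x²y² ∂_x∂_y`. -/
noncomputable def Gop (f : MvPolynomial (Fin 2) ℚ) : MvPolynomial (Fin 2) ℚ :=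
  X 0 * X 1 ^ 2 * (pderiv (0 : Fin 2) f + pderiv (1 : Fin 2) f)
    + C (1 / 2 : ℚ) * (X 0 ^ 2 * X 1 ^ 2) *
        (pderiv (0 : Fin 2) (pderiv (0 : Fin 2) f) + pderiv (1 : Fin 2) (pderiv (1 : Fin 2) f))
    + X 0 ^ 2 * X 1 ^ 2 * pderiv (0 : Fin 2) (pderiv (1 : Fin 2) f)

noncomputable abbrev KK := FractionRing (MvPolynomial (Fin 2) ℚ)
noncomputable abbrev φφ : MvPolynomial (Fin 2) ℚ →+* KK := algebraMap _ _

lemma phiC (q : ℚ) : φφ (C q) = (q : KK) := eq_ratCast (φφ.comp C) q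

/-- coefficients -/
noncomputable def cc0 (k : ℕ) : ℚ := (k : ℚ) * ((k : ℚ) + 1) / 2
noncomputable def cc1 (k n : ℕ) : ℚ := ((k : ℚ) + 1) * (2 * (n : ℚ) + 1)
noncomputable def cc2 (n : ℕ) : ℚ := 2 * (n : ℚ) * ((n : ℚ) - 1)

lemma cc0_nonneg (k : ℕ) : 0 ≤ cc0 k := by unfold cc0; positivity
lemma cc1_nonneg (k n : ℕ) : 0 ≤ cc1 k n := by unfold cc1; positivity
lemma cc2_nonneg (n : ℕ) : 0 ≤ cc2 n := by
  unfold cc2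
  rcases n with _ | n
  · norm_num
  · push_cast; nlinarith [Nat.cast_nonneg (α := ℚ) n]

lemma cc2_small {n : ℕ} (h : n ≤ 1) : cc2 n = 0 := by
  interval_cases n <;> simp [cc2]

lemma Gop_key (k n a bb c : ℕ) (ha : a = n + 2) (hb : bb = n) (hc : c = n - 2) :
    Gop (X 1 * ((X 0 * X 1) ^ k * (X 0 + X 1) ^ n)) =
      C (cc0 k) * (X 1 * ((X 0 * X 1) ^ k * (X 0 + X 1) ^ a))
    + C (cc1 k n) * (X 1 * ((X 0 * X 1) ^ (k + 1) * (X 0 + X 1) ^ bb))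
    + C (cc2 n) * (X 1 * ((X 0 * X 1) ^ (k + 2) * (X 0 + X 1) ^ c)) := by
  subst a bb c
  unfold cc0 cc1 cc2
  obtain _ | _ | k := k <;> obtain _ | _ | n := n <;>
  · simp only [Gop, pderiv_mul, pderiv_pow, pderiv_X, map_add, Derivation.map_natCast,
      pderiv_one, Nat.add_sub_cancel, mul_zero, zero_mul, add_zero, zero_add, mul_one,
      Nat.sub_self, Nat.zero_sub, Nat.reduceSub, Nat.reduceAdd, Nat.cast_ofNat,
      Pi.single_eq_same, Pi.single_eq_of_ne (by decide : (1 : Fin 2) ≠ 0),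
      Pi.single_eq_of_ne (by decide : (0 : Fin 2) ≠ 1)]
    apply IsFractionRing.injective (MvPolynomial (Fin 2) ℚ) KK
    push_cast [map_add, map_mul, map_pow, map_natCast, map_ofNat, map_one, map_zero, phiC]
    ring

lemma Gop_sum {ι : Type*} (s : Finset ι) (g : ι → MvPolynomial (Fin 2) ℚ) :
    Gop (∑ i ∈ s, g i) = ∑ i ∈ s, Gop (g i) := by
  simp only [Gop, map_sum, Finset.mul_sum, ← Finset.sum_add_distrib]

lemma Gop_C_mul (a : ℚ) (p : MvPolynomial (Fin 2) ℚ) : Gop (C a * p) = C a * Gop p := by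
  simp only [Gop, pderiv_C_mul]; ring

/-- `G` maps `y` times a γ-positive polynomial of degree `m` to `y` times a
γ-positive polynomial of degree `m+2`. -/
theorem G_preserves_y_gamma_positive (m : ℕ) (f : MvPolynomial (Fin 2) ℚ) (b : ℕ → ℚ)
    (hb : ∀ k, 0 ≤ b k)
    (hf : f = X 1 * ∑ k ∈ range (m / 2 + 1),
        C (b k) * (X 0 * X 1) ^ k * (X 0 + X 1) ^ (m - 2 * k)) :
    ∃ b' : ℕ → ℚ, (∀ k, 0 ≤ b' k) ∧
      Gop f = X 1 * ∑ k ∈ range ((m + 2) / 2 + 1),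
        C (b' k) * (X 0 * X 1) ^ k * (X 0 + X 1) ^ (m + 2 - 2 * k) := by
  classical
  set P : ℕ → MvPolynomial (Fin 2) ℚ :=
    fun j => X 1 * ((X 0 * X 1) ^ j * (X 0 + X 1) ^ (m + 2 - 2 * j)) with hP
  refine ⟨fun j =>
      (if j ≤ m / 2 then b j * cc0 j else 0)
    + (if 1 ≤ j then b (j - 1) * cc1 (j - 1) (m - 2 * (j - 1)) else 0)
    + (if 2 ≤ j then b (j - 2) * cc2 (m - 2 * (j - 2)) else 0), ?_, ?_⟩
  · intro j
    dsimp only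
    have h1 : (0:ℚ) ≤ if j ≤ m / 2 then b j * cc0 j else 0 := by
      split <;> first | positivity | exact mul_nonneg (hb j) (cc0_nonneg j)
    have h2 : (0:ℚ) ≤ if 1 ≤ j then b (j - 1) * cc1 (j - 1) (m - 2 * (j - 1)) else 0 := by
      split
      · exact mul_nonneg (hb _) (cc1_nonneg _ _)
      · rfl
    have h3 : (0:ℚ) ≤ if 2 ≤ j then b (j - 2) * cc2 (m - 2 * (j - 2)) else 0 := by
      split
      · exact mul_nonneg (hb _) (cc2_nonneg _)
      · rfl
    linarith
  · dsimp only
    have hrange : (m + 2) / 2 + 1 = m / 2 + 2 := by omega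
    rw [hf, hrange]
    have hL : Gop (X 1 * ∑ k ∈ range (m / 2 + 1),
          C (b k) * (X 0 * X 1) ^ k * (X 0 + X 1) ^ (m - 2 * k))
        = ∑ k ∈ range (m / 2 + 1),
            (C (b k * cc0 k) * P k + C (b k * cc1 k (m - 2 * k)) * P (k + 1)
              + C (b k * cc2 (m - 2 * k)) * P (k + 2)) := by
      rw [Finset.mul_sum, Gop_sum]
      refine Finset.sum_congr rfl fun k hk => ?_
      have hk' : k ≤ m / 2 := by simpa [Nat.lt_succ_iff] using hk
      have hx : (X 1 * (C (b k) * (X 0 * X 1) ^ k * (X 0 + X 1) ^ (m - 2 * k))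
            : MvPolynomial (Fin 2) ℚ)
          = C (b k) * (X 1 * ((X 0 * X 1) ^ k * (X 0 + X 1) ^ (m - 2 * k))) := by ring
      rw [hx, Gop_C_mul, Gop_key k (m - 2 * k) (m + 2 - 2 * k) (m + 2 - 2 * (k + 1))
        (m + 2 - 2 * (k + 2)) (by omega) (by omega) (by omega)]
      simp only [hP]
      rw [C_mul, C_mul, C_mul]
      ring
    have hR : (X 1 * ∑ j ∈ range (m / 2 + 2),
          C ((if j ≤ m / 2 then b j * cc0 j else 0)
            + (if 1 ≤ j then b (j - 1) * cc1 (j - 1) (m - 2 * (j - 1)) else 0)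
            + (if 2 ≤ j then b (j - 2) * cc2 (m - 2 * (j - 2)) else 0))
            * (X 0 * X 1) ^ j * (X 0 + X 1) ^ (m + 2 - 2 * j))
        = (∑ j ∈ range (m / 2 + 2), C (if j ≤ m / 2 then b j * cc0 j else 0) * P j)
        + (∑ j ∈ range (m / 2 + 2),
            C (if 1 ≤ j then b (j - 1) * cc1 (j - 1) (m - 2 * (j - 1)) else 0) * P j)
        + (∑ j ∈ range (m / 2 + 2),
            C (if 2 ≤ j then b (j - 2) * cc2 (m - 2 * (j - 2)) else 0) * P j) := by
      rw [Finset.mul_sum, ← Finset.sum_add_distrib, ← Finset.sum_add_distrib]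
      refine Finset.sum_congr rfl fun j _ => ?_
      rw [hP, map_add, map_add]
      ring
    have eA : ∑ j ∈ range (m / 2 + 2), C (if j ≤ m / 2 then b j * cc0 j else 0) * P j
        = ∑ k ∈ range (m / 2 + 1), C (b k * cc0 k) * P k := by
      rw [show m / 2 + 2 = (m / 2 + 1) + 1 by omega, Finset.sum_range_succ,
        if_neg (by omega), map_zero, zero_mul, add_zero]
      refine Finset.sum_congr rfl fun k hk => ?_
      have hk' : k ≤ m / 2 := by simpa [Nat.lt_succ_iff] using hk
      rw [if_pos hk']
    have eB : ∑ j ∈ range (m / 2 + 2),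
          C (if 1 ≤ j then b (j - 1) * cc1 (j - 1) (m - 2 * (j - 1)) else 0) * P j
        = ∑ k ∈ range (m / 2 + 1), C (b k * cc1 k (m - 2 * k)) * P (k + 1) := by
      rw [show m / 2 + 2 = (m / 2 + 1) + 1 by omega, Finset.sum_range_succ',
        if_neg (by omega), map_zero, zero_mul, add_zero]
      refine Finset.sum_congr rfl fun k hk => ?_
      rw [if_pos (by omega), Nat.add_sub_cancel]
    have eC : ∑ j ∈ range (m / 2 + 2),
          C (if 2 ≤ j then b (j - 2) * cc2 (m - 2 * (j - 2)) else 0) * P j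
        = ∑ k ∈ range (m / 2 + 1), C (b k * cc2 (m - 2 * k)) * P (k + 2) := by
      rw [show m / 2 + 2 = (m / 2 + 1) + 1 by omega, Finset.sum_range_succ',
        if_neg (by omega), map_zero, zero_mul, add_zero]
      rw [Finset.sum_range_succ', if_neg (by omega), map_zero, zero_mul, add_zero]
      rw [Finset.sum_range_succ, cc2_small (show m - 2 * (m / 2) ≤ 1 by omega),
        mul_zero, map_zero, zero_mul, add_zero]
      refine Finset.sum_congr rfl fun k hk => ?_
      rw [if_pos (by omega), show k + 1 + 1 - 2 = k by omega, show k + 1 + 1 = k + 2 by omega]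
    rw [hL, Finset.sum_add_distrib, Finset.sum_add_distrib, hR, eA, eB, eC]
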